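/- arXiv:2503.07148 — 2 statements merged into one kernel-verified Lean document; each statement's English description precedes it below -/
import Mathlib

section
/- Let S and A be types, f : S → A → S a deterministic transition function, R : S → A → ℝ a reward function with |R s a| ≤ Rmax for all s, a, and γ ∈ (0,1) a discount factor. For a stationary policy π : S → A define the trajectory map gπ : S → S by gπ s = f s (π s) and the value function V^π : S → ℝ by V^π s = ∑'_{t : ℕ} γ^t · R (gπ^[t] s) (π (gπ^[t] s)). Then for any two stationary policies π, π' : S → A and any s ∈ S, V^π s − V^{π'} s = ∑'_{t : ℕ} γ^t · (R (gπ^[t] s) (π (gπ^[t] s)) + γ · V^{π'} (gπ (gπ^[t] s)) − V^{π'} (gπ^[t] s)). -/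
/-- Trajectory map of a stationary policy in a deterministic MDP. -/
def traj {S A : Type*} (f : S → A → S) (π : S → A) : S → S :=
  fun s => f s (π s)

/-- Discounted value function of a stationary policy in a deterministic MDP. -/
noncomputable def value {S A : Type*} (f : S → A → S) (R : S → A → ℝ) (γ : ℝ)
    (π : S → A) (s : S) : ℝ :=
  ∑' t : ℕ, γ ^ t * R ((traj f π)^[t] s) (π ((traj f π)^[t] s))

/-!
Write `sₜ = gπ^[t] s` and `bₜ = γ ^ t * V^{π'} sₜ`. Since `sₜ₊₁ = gπ sₜ`, the `t`-th summand on
the right is `γ ^ t * R sₜ (π sₜ) + (bₜ₊₁ - bₜ)`. The rewards sum to `V^π s`; as `V^{π'}` is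
bounded, `b` is summable and the differences telescope to `-b₀ = -V^{π'} s`.
-/

theorem HasSum.succ_sub {G : Type*} [AddCommGroup G] [TopologicalSpace G]
    [IsTopologicalAddGroup G] {b : ℕ → G} {a : G} (h : HasSum b a) :
    HasSum (fun n => b (n + 1) - b n) (-b 0) := by
  have hshift : HasSum (fun n => b (n + 1)) (a - b 0) := by
    simpa using (hasSum_nat_add_iff' 1).mpr h
  simpa using hshift.sub h

section Discounted

variable {γ C : ℝ} {x : ℕ → ℝ}

theorem norm_pow_mul_le (hx : ∀ t, |x t| ≤ C) (t : ℕ) : ‖γ ^ t * x t‖ ≤ C * |γ| ^ t := by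
  rw [Real.norm_eq_abs, abs_mul, abs_pow, mul_comm]
  exact mul_le_mul_of_nonneg_right (hx t) (by positivity)

theorem summable_pow_mul_of_abs_le (hγ : |γ| < 1) (hx : ∀ t, |x t| ≤ C) :
    Summable fun t => γ ^ t * x t :=
  .of_norm_bounded ((summable_geometric_of_lt_one (abs_nonneg γ) hγ).mul_left C)
    (norm_pow_mul_le hx)

theorem abs_tsum_pow_mul_le (hγ : |γ| < 1) (hx : ∀ t, |x t| ≤ C) :
    |∑' t, γ ^ t * x t| ≤ C / (1 - |γ|) :=
  tsum_of_norm_bounded ((hasSum_geometric_of_lt_one (abs_nonneg γ) hγ).mul_left C)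
    (norm_pow_mul_le hx)

end Discounted

section MDP

variable {S A : Type*} (f : S → A → S) {R : S → A → ℝ} {Rmax γ : ℝ}

theorem summable_discounted_reward (hR : ∀ s a, |R s a| ≤ Rmax) (hγ : |γ| < 1)
    (π : S → A) (s : S) :
    Summable fun t : ℕ => γ ^ t * R ((traj f π)^[t] s) (π ((traj f π)^[t] s)) :=
  summable_pow_mul_of_abs_le hγ fun _ => hR _ _

theorem abs_value_le (hR : ∀ s a, |R s a| ≤ Rmax) (hγ : |γ| < 1) (π : S → A) (s : S) :
    |value f R γ π s| ≤ Rmax / (1 - |γ|) :=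
  abs_tsum_pow_mul_le hγ fun _ => hR _ _

end MDP

/-- Performance-difference lemma for deterministic MDPs: the value gap between two
stationary policies equals the discounted sum, along the trajectory of `π`, of the
one-step advantage of `π`'s action with respect to the value function of `π'`. -/
theorem performance_difference
    {S A : Type*} (f : S → A → S) (R : S → A → ℝ) (Rmax : ℝ)
    (hR : ∀ s a, |R s a| ≤ Rmax)
    (γ : ℝ) (hγ0 : 0 < γ) (hγ1 : γ < 1)
    (π π' : S → A) (s : S) :
    value f R γ π s - value f R γ π' s
      = ∑' t : ℕ, γ ^ t *
          (R ((traj f π)^[t] s) (π ((traj f π)^[t] s))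
            + γ * value f R γ π' (traj f π ((traj f π)^[t] s))
            - value f R γ π' ((traj f π)^[t] s)) := by
  have hγ : |γ| < 1 := abs_lt.mpr ⟨by linarith, hγ1⟩
  set g := traj f π
  set b : ℕ → ℝ := fun t => γ ^ t * value f R γ π' (g^[t] s)
  have hb : Summable b := summable_pow_mul_of_abs_le hγ fun _ => abs_value_le f hR hγ π' _
  have hsplit : ∀ t : ℕ, γ ^ t * (R (g^[t] s) (π (g^[t] s))
      + γ * value f R γ π' (g (g^[t] s)) - value f R γ π' (g^[t] s))
      = γ ^ t * R (g^[t] s) (π (g^[t] s)) + (b (t + 1) - b t) := by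
    intro t
    simp only [b, Function.iterate_succ_apply']
    ring
  rw [tsum_congr hsplit,
    ((summable_discounted_reward f hR hγ π s).hasSum.add hb.hasSum.succ_sub).tsum_eq]
  simp [b, value, sub_eq_add_neg]
end

section
/- Let S and A be types, f : S → A → S a deterministic transition function, R : S → A → ℝ a reward function with |R s a| ≤ Rmax for all s, a, and γ ∈ (0,1) a discount factor. For a stationary policy π : S → A define the trajectory map gπ : S → S by gπ s = f s (π s) and the value function V^π : S → ℝ by V^π s = ∑'_{t : ℕ} γ^t · R (gπ^[t] s) (π (gπ^[t] s)). Let π, π' : S → A be stationary policies, s ∈ S, and ε ≥ 0. If for every t ∈ ℕ, |R (gπ^[t] s) (π (gπ^[t] s)) + γ · V^{π'} (gπ (gπ^[t] s)) − V^{π'} (gπ^[t] s)| ≤ ε, then |V^π s − V^{π'} s| ≤ ε/(1−γ). -/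
private lemma abs_tsum_le' {f : ℕ → ℝ} (h : Summable fun n => |f n|) :
    |∑' n, f n| ≤ ∑' n, |f n| := by
  have h' : Summable fun n => ‖f n‖ := by simpa [Real.norm_eq_abs] using h
  simpa [Real.norm_eq_abs] using norm_tsum_le_tsum_norm h'

/-- Performance difference with geometric amplification: if the one-step advantage of
policy `π` with respect to the value function of `π'` is bounded by `ε` along the
trajectory of `π`, then the value gap between the two policies is at most `ε/(1-γ)`. -/
theorem performance_difference_amplification
    {S A : Type*} (f : S → A → S) (R : S → A → ℝ) (Rmax : ℝ)
    (hR : ∀ s a, |R s a| ≤ Rmax)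
    (γ : ℝ) (hγ0 : 0 < γ) (hγ1 : γ < 1)
    (π π' : S → A) (s : S) (ε : ℝ) (hε : 0 ≤ ε)
    (hadv : ∀ t : ℕ,
      |R ((traj f π)^[t] s) (π ((traj f π)^[t] s))
        + γ * value f R γ π' (traj f π ((traj f π)^[t] s))
        - value f R γ π' ((traj f π)^[t] s)| ≤ ε) :
    |value f R γ π s - value f R γ π' s| ≤ ε / (1 - γ) := by
  have hγ0' : (0:ℝ) ≤ γ := le_of_lt hγ0
  have h1γ : (0:ℝ) < 1 - γ := by linarith
  have hRmax : 0 ≤ Rmax := le_trans (abs_nonneg _) (hR s (π s))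
  have hgeo : Summable (fun t : ℕ => γ ^ t) := summable_geometric_of_lt_one hγ0' hγ1
  have hsumV : ∀ (ρ : S → A) (σ : S),
      Summable (fun t : ℕ => γ ^ t * R ((traj f ρ)^[t] σ) (ρ ((traj f ρ)^[t] σ))) := by
    intro ρ σ
    apply Summable.of_abs
    apply Summable.of_nonneg_of_le (fun t => abs_nonneg _)
      (fun t => ?_) (hgeo.mul_right Rmax)
    rw [abs_mul, abs_pow, abs_of_nonneg hγ0']
    exact mul_le_mul_of_nonneg_left (hR _ _) (pow_nonneg hγ0' t)
  have hVbound : ∀ (ρ : S → A) (σ : S), |value f R γ ρ σ| ≤ Rmax / (1 - γ) := by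
    intro ρ σ
    have h1 : |value f R γ ρ σ|
        ≤ ∑' t : ℕ, |γ ^ t * R ((traj f ρ)^[t] σ) (ρ ((traj f ρ)^[t] σ))| :=
      abs_tsum_le' (hsumV ρ σ).abs
    refine h1.trans ?_
    have h2 : (∑' t : ℕ, |γ ^ t * R ((traj f ρ)^[t] σ) (ρ ((traj f ρ)^[t] σ))|)
        ≤ ∑' t : ℕ, γ ^ t * Rmax := by
      apply Summable.tsum_le_tsum _ ((hsumV ρ σ).abs) (hgeo.mul_right Rmax)
      intro t
      rw [abs_mul, abs_pow, abs_of_nonneg hγ0']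
      exact mul_le_mul_of_nonneg_left (hR _ _) (pow_nonneg hγ0' t)
    refine h2.trans ?_
    rw [tsum_mul_right, tsum_geometric_of_lt_one hγ0' hγ1, div_eq_mul_inv, mul_comm]
  set g := traj f π with hg
  set st : ℕ → S := fun t => g^[t] s with hst
  set u : ℕ → ℝ := fun t => γ ^ t * R (st t) (π (st t)) with hu
  set w : ℕ → ℝ := fun t => γ ^ t * value f R γ π' (st t) with hw
  set δ : ℕ → ℝ := fun t => R (st t) (π (st t)) + γ * value f R γ π' (st (t+1))
      - value f R γ π' (st t) with hδ
  have hδle : ∀ t, |δ t| ≤ ε := by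
    intro t
    have h := hadv t
    rw [← Function.iterate_succ_apply' g t s] at h
    exact h
  have hdecomp : ∀ t, γ ^ t * δ t = u t + (w (t+1) - w t) := by
    intro t
    simp only [hδ, hu, hw, pow_succ]
    ring
  have hsumδ : Summable (fun t => γ ^ t * δ t) := by
    apply Summable.of_abs
    apply Summable.of_nonneg_of_le (fun t => abs_nonneg _) (fun t => ?_) (hgeo.mul_right ε)
    rw [abs_mul, abs_pow, abs_of_nonneg hγ0']
    exact mul_le_mul_of_nonneg_left (hδle t) (pow_nonneg hγ0' t)
  have hw0 : Filter.Tendsto w Filter.atTop (nhds 0) := by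
    have hb : ∀ n, |w n| ≤ γ ^ n * (Rmax / (1 - γ)) := by
      intro n
      rw [hw]
      simp only [abs_mul, abs_pow, abs_of_nonneg hγ0']
      exact mul_le_mul_of_nonneg_left (hVbound π' (st n)) (pow_nonneg hγ0' n)
    have hg0 : Filter.Tendsto (fun n => γ ^ n * (Rmax / (1 - γ))) Filter.atTop (nhds 0) := by
      have := (tendsto_pow_atTop_nhds_zero_of_lt_one hγ0' hγ1).mul_const (Rmax / (1 - γ))
      simpa using this
    have hgneg : Filter.Tendsto (fun n => -(γ ^ n * (Rmax / (1 - γ)))) Filter.atTop (nhds 0) := by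
      simpa using hg0.neg
    refine tendsto_of_tendsto_of_tendsto_of_le_of_le hgneg hg0 (fun n => ?_) (fun n => ?_)
    · exact neg_le_of_abs_le (hb n)
    · exact le_of_abs_le (hb n)
  have hpartial : ∀ n, ∑ t ∈ Finset.range n, γ ^ t * δ t
      = (∑ t ∈ Finset.range n, u t) + (w n - w 0) := by
    intro n
    rw [← Finset.sum_range_sub w n, ← Finset.sum_add_distrib]
    exact Finset.sum_congr rfl fun t _ => hdecomp t
  have hVπ : value f R γ π s = ∑' t, u t := rfl
  have hw0eq : w 0 = value f R γ π' s := by simp [hw, hst]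
  have hlim : Filter.Tendsto (fun n => ∑ t ∈ Finset.range n, γ ^ t * δ t) Filter.atTop
      (nhds (value f R γ π s - value f R γ π' s)) := by
    have h1 : Filter.Tendsto (fun n => ∑ t ∈ Finset.range n, u t) Filter.atTop
        (nhds (value f R γ π s)) := by
      rw [hVπ]; exact (hsumV π s).hasSum.tendsto_sum_nat
    have h2 := h1.add (hw0.sub_const (value f R γ π' s))
    have he : value f R γ π s + (0 - value f R γ π' s)
        = value f R γ π s - value f R γ π' s := by ring
    rw [he] at h2
    simp only [hpartial, hw0eq]
    exact h2
  have htsumδ : ∑' t, γ ^ t * δ t = value f R γ π s - value f R γ π' s :=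
    tendsto_nhds_unique hsumδ.hasSum.tendsto_sum_nat hlim
  rw [← htsumδ]
  calc |∑' t, γ ^ t * δ t| ≤ ∑' t, |γ ^ t * δ t| := abs_tsum_le' hsumδ.abs
    _ ≤ ∑' t : ℕ, γ ^ t * ε := by
        apply Summable.tsum_le_tsum _ hsumδ.abs (hgeo.mul_right ε)
        intro t
        rw [abs_mul, abs_pow, abs_of_nonneg hγ0']
        exact mul_le_mul_of_nonneg_left (hδle t) (pow_nonneg hγ0' t)
    _ = ε / (1 - γ) := by
        rw [tsum_mul_right, tsum_geometric_of_lt_one hγ0' hγ1, div_eq_mul_inv, mul_comm]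
end
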